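/- Let L, L₁, …, L_K : ℝⁿ → ℝ with each L_k three times continuously differentiable and L continuously differentiable. Fix weights w₁, …, w_K ≥ 0 with Σ_k w_k = 1, indices i ≠ j, and δ > 0. Define the vector fields u₁ = −Σ_k w_k ∇L_k − δ(∇L_i − ∇L_j), u₂ = −Σ_k w_k ∇L_k + δ(∇L_i − ∇L_j), and v = −Σ_k w_k ∇L_k, and let Φ₁, Φ₂, Φ̄ be flows of u₁, u₂, v respectively. Then for each fixed x, as ε → 0⁺, L(Φ₂(ε, Φ₁(ε, x))) − L(Φ̄(2ε, x)) = δ·ε²·⟨Hess(Σ_k w_k L_k)(x)·(∇L_i(x) − ∇L_j(x)) − Hess(L_i − L_j)(x)·(Σ_k w_k ∇L_k(x)), ∇L(x)⟩ + o(ε²). -/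

import Mathlib

open Asymptotics Topology Set Metric Filter
open scoped RealInnerProductSpace

/-!
A flow of a C¹ field `u` satisfies `Φ(t, y) = y + t u(y) + t²/2 Du(y) u(y) + o(t²)` as `t → 0⁺`,
uniformly for `y` near `x`: a barrier argument keeps the trajectories from `y` in a ball where `u`
is bounded and `Du(·) u(·)` is close to its value at `x`, and two mean value estimates follow.
Running the flow of `v - δ d` and then that of `v + δ d` for time `ε` each, the first-order terms
add up to those of the flow of `v` for time `2ε`, and the second-order terms leave
`δ ε² (Dd v - Dv d)(x)`, i.e. `δ ε²` times the Lie bracket `[v, d](x)`. The endpoints are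
`O(ε²)` apart, so strict differentiability of `L` at `x` turns this into the change of `L`.
With `v = -∇(Σ_k w_k L_k)` and `d = ∇(L_i - L_j)` the bracket is the stated Hessian expression.
-/

theorem HasStrictFDerivAt.sub_sub_isLittleO_of_tendsto {𝕜 E F G α : Type*}
    [NontriviallyNormedField 𝕜] [NormedAddCommGroup E] [NormedSpace 𝕜 E]
    [NormedAddCommGroup F] [NormedSpace 𝕜 F] [NormedAddCommGroup G]
    {f : E → F} {f' : E →L[𝕜] F} {x : E} (hf : HasStrictFDerivAt f f' x) {l : Filter α}
    {P Q v : α → E} {g : α → G} (hP : Tendsto P l (𝓝 x)) (hQ : Tendsto Q l (𝓝 x))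
    (hPQ : (fun a => P a - Q a - v a) =o[l] g) (hv : v =O[l] g) :
    (fun a => f (P a) - f (Q a) - f' (v a)) =o[l] g := by
  have hstrict := hf.isLittleO.comp_tendsto (hP.prodMk_nhds hQ)
  have hsub : (fun a => P a - Q a) =O[l] g := (hPQ.isBigO.add hv).congr_left fun a => by abel
  refine ((hstrict.trans_isBigO hsub).add ((f'.isBigO_comp _ _).trans_isLittleO hPQ)).congr_left
    fun a => ?_
  simp only [Function.comp_apply, map_sub]
  abel

theorem tendsto_const_mul_nhdsGE_zero {c : ℝ} (hc : 0 ≤ c) :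
    Tendsto (fun ε : ℝ => c * ε) (𝓝[≥] 0) (𝓝[≥] 0) :=
  tendsto_nhdsWithin_of_tendsto_nhds_of_eventually_within _
    (((continuous_const.mul continuous_id).tendsto' 0 0 (by simp)).mono_left nhdsWithin_le_nhds)
    (eventually_nhdsWithin_of_forall fun _ hε => mul_nonneg hc hε)

section Flow

variable {E : Type*} [NormedAddCommGroup E] [NormedSpace ℝ E]

def IsLocalFlow (u : E → E) (Φ : ℝ → E → E) : Prop :=
  (∀ y, Φ 0 y = y) ∧
    ∃ r > 0, ∀ y, ∀ t : ℝ, |t| < r → HasDerivAt (fun s => Φ s y) (u (Φ t y)) t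

theorem norm_sub_le_mul_of_hasDerivAt_of_norm_lt {f : ℝ → E} {u : E → E} {R M ρ : ℝ}
    (hf : ∀ t ∈ Icc 0 ρ, HasDerivAt f (u (f t)) t) (hR : 0 ≤ R)
    (hu : ∀ z ∈ closedBall (f 0) R, ‖u z‖ < M) (hMρ : M * ρ ≤ R) :
    ∀ t ∈ Icc 0 ρ, ‖f t - f 0‖ ≤ M * t := by
  have hM : 0 ≤ M := (norm_nonneg _).trans (hu _ (mem_closedBall_self hR)).le
  refine image_norm_le_of_norm_deriv_right_lt_deriv_boundary' (f' := fun t => u (f t))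
    (B' := fun _ => M) ?_
    (fun t ht => ((hf t (Ico_subset_Icc_self ht)).sub_const _).hasDerivWithinAt)
    (by simp) (by fun_prop) (fun t _ => ?_) (fun t ht hft => hu _ ?_)
  · exact fun t ht => ((hf t ht).continuousAt.sub continuousAt_const).continuousWithinAt
  · simpa using ((hasDerivAt_id t).const_mul M).hasDerivWithinAt
  · rw [mem_closedBall, dist_eq_norm, hft]
    exact (mul_le_mul_of_nonneg_left ht.2.le hM).trans hMρ

theorem norm_sub_taylor_two_le {g h k : ℝ → E} {t K : ℝ} (ht : 0 ≤ t)
    (hg : ∀ s ∈ Icc 0 t, HasDerivAt g (h s) s) (hh : ∀ s ∈ Icc 0 t, HasDerivAt h (k s) s)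
    (hk : ∀ s ∈ Icc 0 t, ‖k s - k 0‖ ≤ K) :
    ‖g t - g 0 - t • h 0 - (t ^ 2 / 2) • k 0‖ ≤ K * t ^ 2 := by
  have hK : 0 ≤ K := by simpa using hk 0 ⟨le_rfl, ht⟩
  have hfirst : ∀ s ∈ Icc 0 t, ‖h s - h 0 - s • k 0‖ ≤ K * s := by
    intro s hs
    simpa using norm_image_sub_le_of_norm_deriv_le_segment' (f := fun s => h s - h 0 - s • k 0)
      (fun s hs' => (((hh s (Icc_subset_Icc_right hs.2 hs')).sub_const _).sub
        (by simpa using (hasDerivAt_id s).smul_const (k 0))).hasDerivWithinAt)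
      (fun s hs' => hk s (Icc_subset_Icc_right hs.2 (Ico_subset_Icc_self hs'))) s ⟨hs.1, le_rfl⟩
  have hsq : ∀ s, HasDerivAt (fun s : ℝ => (s ^ 2 / 2) • k 0) (s • k 0) s := fun s => by
    simpa using ((hasDerivAt_pow 2 s).div_const 2).smul_const (k 0)
  have := norm_image_sub_le_of_norm_deriv_le_segment'
    (f := fun s => g s - g 0 - s • h 0 - (s ^ 2 / 2) • k 0) (C := K * t)
    (fun s hs => ((((hg s hs).sub_const _).sub
      (by simpa using (hasDerivAt_id s).smul_const (h 0))).sub (hsq s)).hasDerivWithinAt)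
    (fun s hs => (hfirst s (Ico_subset_Icc_self hs)).trans
      (mul_le_mul_of_nonneg_left hs.2.le hK)) t ⟨ht, le_rfl⟩
  simpa [sq, mul_assoc] using this

theorem IsLocalFlow.sub_taylor_isLittleO {u : E → E} {Φ : ℝ → E → E} (hΦ : IsLocalFlow u Φ)
    (hu : ContDiff ℝ 1 u) (x : E) :
    (fun p : ℝ × E => Φ p.1 p.2 - p.2 - p.1 • u p.2 - (p.1 ^ 2 / 2) • fderiv ℝ u p.2 (u p.2))
      =o[𝓝[≥] 0 ×ˢ 𝓝 x] fun p => p.1 ^ 2 := by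
  obtain ⟨hΦ0, r, hr, hΦd⟩ := hΦ
  set M := ‖u x‖ + 1
  have hA : Continuous fun z => fderiv ℝ u z (u z) :=
    (hu.continuous_fderiv one_ne_zero).clm_apply hu.continuous
  rw [isLittleO_iff]
  intro c hc
  have hnear : ∀ᶠ z in 𝓝 x,
      ‖u z‖ < M ∧ dist (fderiv ℝ u z (u z)) (fderiv ℝ u x (u x)) < c / 2 :=
    (hu.continuous.norm.continuousAt.eventually (gt_mem_nhds (lt_add_one _))).and
      (hA.continuousAt.eventually (ball_mem_nhds _ (half_pos hc)))
  obtain ⟨ζ, hζ, hball⟩ := eventually_nhds_iff_ball.mp hnear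
  have hM : 0 < M := by positivity
  set ρ := min (r / 2) (ζ / 2 / M)
  have hρ : 0 < ρ := lt_min (half_pos hr) (by positivity)
  have hMρ : M * ρ ≤ ζ / 2 := by rw [← le_div_iff₀' hM]; exact min_le_right _ _
  filter_upwards [prod_mem_prod (Icc_mem_nhdsGE hρ) (ball_mem_nhds x (half_pos hζ))]
    with ⟨t, y⟩ ⟨ht, hy⟩
  have hf : ∀ s ∈ Icc 0 ρ, HasDerivAt (fun s => Φ s y) (u (Φ s y)) s := fun s hs =>
    hΦd y s (by rw [abs_of_nonneg hs.1]; linarith [hs.2, min_le_left (r / 2) (ζ / 2 / M)])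
  have hnearball : closedBall y (ζ / 2) ⊆ ball x ζ := fun z hz => by
    rw [mem_ball] at hy ⊢; rw [mem_closedBall] at hz; linarith [dist_triangle z y x]
  have hstay : ∀ s ∈ Icc 0 ρ, Φ s y ∈ ball x ζ := by
    have hbound := norm_sub_le_mul_of_hasDerivAt_of_norm_lt hf (half_pos hζ).le
      (fun z hz => (hball z (hnearball (by rwa [hΦ0] at hz))).1) hMρ
    refine fun s hs => hnearball ?_
    rw [mem_closedBall, dist_eq_norm]
    simpa only [hΦ0] using (hbound s hs).trans ((mul_le_mul_of_nonneg_left hs.2 hM.le).trans hMρ)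
  have htaylor := norm_sub_taylor_two_le (g := fun s => Φ s y) (K := c) ht.1
    (fun s hs => hf s ⟨hs.1, hs.2.trans ht.2⟩)
    (fun s hs => ((hu.differentiable one_ne_zero _).hasFDerivAt).comp_hasDerivAt s
      (hf s ⟨hs.1, hs.2.trans ht.2⟩))
    (fun s hs => by
      rw [← dist_eq_norm]
      have h1 := (hball _ (hstay s ⟨hs.1, hs.2.trans ht.2⟩)).2
      have h2 := (hball _ (hstay 0 ⟨le_rfl, hρ.le⟩)).2
      linarith [dist_triangle_right (fderiv ℝ u (Φ s y) (u (Φ s y)))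
        (fderiv ℝ u (Φ 0 y) (u (Φ 0 y))) (fderiv ℝ u x (u x))])
  simpa [hΦ0, sq_abs] using htaylor

theorem IsLocalFlow.tendsto {α : Type*} {u : E → E} {Φ : ℝ → E → E} (hΦ : IsLocalFlow u Φ)
    (hu : ContDiff ℝ 1 u) {x : E} {l : Filter α} {τ : α → ℝ} {y : α → E}
    (hτ : Tendsto τ l (𝓝[≥] 0)) (hy : Tendsto y l (𝓝 x)) :
    Tendsto (fun a => Φ (τ a) (y a)) l (𝓝 x) := by
  have hle : 𝓝[≥] (0 : ℝ) ×ˢ 𝓝 x ≤ 𝓝 (0, x) := by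
    rw [nhds_prod_eq]; exact prod_mono nhdsWithin_le_nhds le_rfl
  have hrem := (hΦ.sub_taylor_isLittleO hu x).trans_tendsto
    (((continuous_fst.pow 2).tendsto' (0, x) 0 (by simp)).mono_left hle)
  have hmain : Tendsto (fun p : ℝ × E => p.2 + p.1 • u p.2 + (p.1 ^ 2 / 2) • fderiv ℝ u p.2 (u p.2))
      (𝓝[≥] 0 ×ˢ 𝓝 x) (𝓝 x) := by
    refine (Continuous.tendsto' ?_ (0, x) x (by simp)).mono_left hle
    have hA : Continuous fun z => fderiv ℝ u z (u z) :=
      (hu.continuous_fderiv one_ne_zero).clm_apply hu.continuous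
    fun_prop
  exact (by simpa using hrem.add hmain : Tendsto (fun p : ℝ × E => Φ p.1 p.2) _ _).comp
    (hτ.prodMk hy)

theorem IsLocalFlow.comp_sub_taylor_isLittleO {u₁ u₂ : E → E} {Φ₁ Φ₂ : ℝ → E → E}
    (hΦ₁ : IsLocalFlow u₁ Φ₁) (hΦ₂ : IsLocalFlow u₂ Φ₂) (hu₁ : ContDiff ℝ 1 u₁)
    (hu₂ : ContDiff ℝ 1 u₂) (x : E) :
    (fun ε : ℝ => Φ₂ ε (Φ₁ ε x) - x - ε • (u₁ x + u₂ x)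
        - ε ^ 2 • ((1 / 2 : ℝ) • fderiv ℝ u₁ x (u₁ x) + fderiv ℝ u₂ x (u₁ x)
          + (1 / 2 : ℝ) • fderiv ℝ u₂ x (u₂ x)))
      =o[𝓝[≥] 0] fun ε => ε ^ 2 := by
  have hy' : HasDerivAt (fun ε => Φ₁ ε x) (u₁ x) 0 := by
    obtain ⟨hΦ0, r, hr, hΦd⟩ := hΦ₁
    simpa [hΦ0] using hΦd x 0 (by simpa using hr)
  have hy := hΦ₁.tendsto hu₁ tendsto_id (tendsto_const_nhds (x := x))
  have hfirst := (hΦ₁.sub_taylor_isLittleO hu₁ x).comp_tendsto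
    (tendsto_id.prodMk (tendsto_const_nhds (x := x)))
  have hsecond := (hΦ₂.sub_taylor_isLittleO hu₂ x).comp_tendsto (tendsto_id.prodMk hy)
  have hfield : (fun ε : ℝ => ε • (u₂ (Φ₁ ε x) - u₂ x - ε • fderiv ℝ u₂ x (u₁ x)))
      =o[𝓝[≥] 0] fun ε => ε ^ 2 := by
    have h := ((hu₂.differentiable one_ne_zero _).hasFDerivAt.comp_hasDerivAt 0 hy').isLittleO
    simp only [Function.comp_apply, hΦ₁.1, sub_zero] at h
    simpa [sq] using (isBigO_refl (fun ε : ℝ => ε) _).smul_isLittleO (h.mono nhdsWithin_le_nhds)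
  have hcoeff : (fun ε : ℝ => (ε ^ 2 / 2) • (fderiv ℝ u₂ (Φ₁ ε x) (u₂ (Φ₁ ε x))
      - fderiv ℝ u₂ x (u₂ x))) =o[𝓝[≥] 0] fun ε => ε ^ 2 := by
    have hA : Continuous fun z => fderiv ℝ u₂ z (u₂ z) :=
      (hu₂.continuous_fderiv one_ne_zero).clm_apply hu₂.continuous
    have h := (isLittleO_one_iff ℝ).mpr (tendsto_sub_nhds_zero_iff.mpr ((hA.tendsto x).comp hy))
    simpa using (isBigO_of_le (𝓝[≥] 0) fun ε : ℝ => (by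
      rw [norm_div, Real.norm_ofNat]; linarith [norm_nonneg (ε ^ 2)] :
        ‖ε ^ 2 / 2‖ ≤ ‖ε ^ 2‖)).smul_isLittleO h
  refine (((hsecond.add hfirst).add hfield).add hcoeff).congr_left fun ε => ?_
  simp only [Function.comp_apply, id]
  module

theorem IsLocalFlow.comp_sub_flow_two_mul_isLittleO {v d : E → E} {δ : ℝ}
    {Φ₁ Φ₂ Φ : ℝ → E → E} (hv : ContDiff ℝ 1 v) (hd : ContDiff ℝ 1 d)
    (hΦ₁ : IsLocalFlow (fun z => v z - δ • d z) Φ₁)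
    (hΦ₂ : IsLocalFlow (fun z => v z + δ • d z) Φ₂) (hΦ : IsLocalFlow v Φ) (x : E) :
    (fun ε : ℝ => Φ₂ ε (Φ₁ ε x) - Φ (2 * ε) x
        - (δ * ε ^ 2) • (fderiv ℝ d x (v x) - fderiv ℝ v x (d x)))
      =o[𝓝[≥] 0] fun ε => ε ^ 2 := by
  have hcomp := hΦ₁.comp_sub_taylor_isLittleO hΦ₂ (hv.sub (hd.const_smul δ))
    (hv.add (hd.const_smul δ)) x
  have hdouble := ((hΦ.sub_taylor_isLittleO hv x).comp_tendsto
    ((tendsto_const_mul_nhdsGE_zero zero_le_two).prodMk (tendsto_const_nhds (x := x)))).trans_isBigO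
      (isBigO_of_le' (c := 4) (g := fun ε : ℝ => ε ^ 2) (l := 𝓝[≥] 0) fun ε => by
        norm_num [mul_pow])
  have hv' := (hv.differentiable one_ne_zero x).hasFDerivAt
  have hd' := ((hd.differentiable one_ne_zero x).hasFDerivAt).fun_const_smul δ
  rw [(hv'.fun_sub hd').fderiv, (hv'.fun_add hd').fderiv] at hcomp
  refine (hcomp.sub hdouble).congr_left fun ε => ?_
  simp only [Function.comp_apply, sub_apply, add_apply, smul_apply, map_sub, map_add, map_smul]
  module

theorem HasStrictFDerivAt.flow_perturbation_isLittleO {F : Type*} [NormedAddCommGroup F]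
    [NormedSpace ℝ F] {f : E → F} {f' : E →L[ℝ] F} {x : E} (hf : HasStrictFDerivAt f f' x)
    {v d : E → E} {δ : ℝ} {Φ₁ Φ₂ Φ : ℝ → E → E} (hv : ContDiff ℝ 1 v) (hd : ContDiff ℝ 1 d)
    (hΦ₁ : IsLocalFlow (fun z => v z - δ • d z) Φ₁)
    (hΦ₂ : IsLocalFlow (fun z => v z + δ • d z) Φ₂) (hΦ : IsLocalFlow v Φ) :
    (fun ε : ℝ => f (Φ₂ ε (Φ₁ ε x)) - f (Φ (2 * ε) x)
        - (δ * ε ^ 2) • f' (fderiv ℝ d x (v x) - fderiv ℝ v x (d x)))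
      =o[𝓝[≥] 0] fun ε => ε ^ 2 := by
  set B := fderiv ℝ d x (v x) - fderiv ℝ v x (d x)
  have hP := hΦ₂.tendsto (τ := fun ε => ε) (hv.add (hd.const_smul δ)) tendsto_id
    (hΦ₁.tendsto (τ := fun ε => ε) (hv.sub (hd.const_smul δ)) tendsto_id
      (tendsto_const_nhds (x := x)))
  have hQ := hΦ.tendsto hv (tendsto_const_mul_nhdsGE_zero zero_le_two) (tendsto_const_nhds (x := x))
  have hB : (fun ε : ℝ => (δ * ε ^ 2) • B) =O[𝓝[≥] 0] fun ε => ε ^ 2 :=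
    isBigO_of_le' (c := ‖δ‖ * ‖B‖) _ fun ε => le_of_eq (by rw [norm_smul, norm_mul]; ring)
  simpa only [map_smul] using hf.sub_sub_isLittleO_of_tendsto hP hQ
    (IsLocalFlow.comp_sub_flow_two_mul_isLittleO hv hd hΦ₁ hΦ₂ hΦ x) hB

end Flow

section Gradient

variable {F : Type*} [NormedAddCommGroup F] [InnerProductSpace ℝ F] [CompleteSpace F]

theorem ContDiff.gradient {f : F → ℝ} {m n : WithTop ℕ∞} (hf : ContDiff ℝ n f) (hmn : m + 1 ≤ n) :
    ContDiff ℝ m (gradient f) :=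
  (InnerProductSpace.toDual ℝ F).symm.contDiff.comp (hf.fderiv_right hmn)

theorem gradient_fun_sum_mul {ι : Type*} (s : Finset ι) (c : ι → ℝ) {f : ι → F → ℝ} {x : F}
    (hf : ∀ i ∈ s, DifferentiableAt ℝ (f i) x) :
    gradient (fun y => ∑ i ∈ s, c i * f i y) x = ∑ i ∈ s, c i • gradient (f i) x := by
  simp only [gradient, fderiv_fun_sum fun i hi => (hf i hi).const_mul (c i), map_sum]
  exact Finset.sum_congr rfl fun i hi => by rw [fderiv_const_mul (hf i hi), map_smul]

theorem gradient_fun_sub {f g : F → ℝ} {x : F} (hf : DifferentiableAt ℝ f x)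
    (hg : DifferentiableAt ℝ g x) :
    gradient (fun y => f y - g y) x = gradient f x - gradient g x := by
  simp [gradient, fderiv_fun_sub hf hg]

end Gradient

theorem weight_schedule_perturbation_excess_loss_general {n K : ℕ}
    (L : EuclideanSpace ℝ (Fin n) → ℝ)
    (Lk : Fin K → EuclideanSpace ℝ (Fin n) → ℝ)
    (hL : ContDiff ℝ 1 L) (hLk : ∀ k, ContDiff ℝ 3 (Lk k))
    (w : Fin K → ℝ)
    (i j : Fin K) (δ : ℝ)
    (Φ₁ Φ₂ Φbar : ℝ → EuclideanSpace ℝ (Fin n) → EuclideanSpace ℝ (Fin n))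
    (hΦ₁0 : ∀ x, Φ₁ 0 x = x) (hΦ₂0 : ∀ x, Φ₂ 0 x = x)
    (hΦbar0 : ∀ x, Φbar 0 x = x)
    (hΦ₁ : ∃ r > (0 : ℝ), ∀ x, ∀ t : ℝ, |t| < r →
      HasDerivAt (fun s => Φ₁ s x)
        (-(∑ k, w k • gradient (Lk k) (Φ₁ t x))
          - δ • (gradient (Lk i) (Φ₁ t x) - gradient (Lk j) (Φ₁ t x))) t)
    (hΦ₂ : ∃ r > (0 : ℝ), ∀ x, ∀ t : ℝ, |t| < r →
      HasDerivAt (fun s => Φ₂ s x)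
        (-(∑ k, w k • gradient (Lk k) (Φ₂ t x))
          + δ • (gradient (Lk i) (Φ₂ t x) - gradient (Lk j) (Φ₂ t x))) t)
    (hΦbar : ∃ r > (0 : ℝ), ∀ x, ∀ t : ℝ, |t| < r →
      HasDerivAt (fun s => Φbar s x)
        (-(∑ k, w k • gradient (Lk k) (Φbar t x))) t)
    (x : EuclideanSpace ℝ (Fin n)) :
    (fun ε : ℝ =>
        L (Φ₂ ε (Φ₁ ε x)) - L (Φbar (2 * ε) x)
          - δ * ε ^ 2 *
            ⟪fderiv ℝ (gradient (fun y => ∑ k, w k * Lk k y)) x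
                (gradient (Lk i) x - gradient (Lk j) x)
              - fderiv ℝ (gradient (fun y => Lk i y - Lk j y)) x
                (∑ k, w k • gradient (Lk k) x),
              gradient L x⟫)
      =o[𝓝[>] 0] fun ε : ℝ => ε ^ 2 := by
  have hdiff : ∀ k, Differentiable ℝ (Lk k) := fun k => (hLk k).differentiable (by norm_num)
  have hgradW : gradient (fun y => ∑ k, w k * Lk k y) = fun z => ∑ k, w k • gradient (Lk k) z :=
    funext fun z => gradient_fun_sum_mul _ _ fun k _ => hdiff k z
  have hgradD :
      gradient (fun y => Lk i y - Lk j y) = fun z => gradient (Lk i) z - gradient (Lk j) z :=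
    funext fun z => gradient_fun_sub (hdiff i z) (hdiff j z)
  have hG : ∀ k, ContDiff ℝ 1 (gradient (Lk k)) := fun k => (hLk k).gradient (by norm_num)
  have hW : ContDiff ℝ 1 fun z => ∑ k, w k • gradient (Lk k) z :=
    ContDiff.sum fun k _ => (hG k).const_smul (w k)
  have hD : ContDiff ℝ 1 fun z => gradient (Lk i) z - gradient (Lk j) z := (hG i).sub (hG j)
  have hloss := ((hL.contDiffAt.hasStrictFDerivAt (x := x) one_ne_zero).flow_perturbation_isLittleO
    hW.neg hD ⟨hΦ₁0, hΦ₁⟩ ⟨hΦ₂0, hΦ₂⟩ ⟨hΦbar0, hΦbar⟩).mono (nhdsWithin_mono _ Ioi_subset_Ici_self)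
  refine hloss.congr_left fun ε => ?_
  rw [hgradW, hgradD, fderiv_fun_neg, map_neg, neg_apply, sub_neg_eq_add, neg_add_eq_sub,
    ← inner_gradient_left, real_inner_comm, smul_eq_mul]

/-- Excess loss from perturbing a constant weight schedule: training first with
the weight of domain `i` increased by `δ` (and that of `j` decreased by `δ`)
for time `ε`, then with the opposite perturbation for time `ε`, compared to the
unperturbed schedule for time `2ε`, changes the loss `L` by
`δ·ε²·P(L_i − L_j, Σ_k w_k L_k; L)(x) + o(ε²)` as `ε → 0⁺`. -/
theorem weight_schedule_perturbation_excess_loss {n K : ℕ}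
    (L : EuclideanSpace ℝ (Fin n) → ℝ)
    (Lk : Fin K → EuclideanSpace ℝ (Fin n) → ℝ)
    (hL : ContDiff ℝ 1 L) (hLk : ∀ k, ContDiff ℝ 3 (Lk k))
    (w : Fin K → ℝ) (hw : ∀ k, 0 ≤ w k) (hw1 : ∑ k, w k = 1)
    (i j : Fin K) (hij : i ≠ j) (δ : ℝ) (hδ : 0 < δ)
    (Φ₁ Φ₂ Φbar : ℝ → EuclideanSpace ℝ (Fin n) → EuclideanSpace ℝ (Fin n))
    (hΦ₁0 : ∀ x, Φ₁ 0 x = x) (hΦ₂0 : ∀ x, Φ₂ 0 x = x)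
    (hΦbar0 : ∀ x, Φbar 0 x = x)
    (hΦ₁ : ∃ r > (0 : ℝ), ∀ x, ∀ t : ℝ, |t| < r →
      HasDerivAt (fun s => Φ₁ s x)
        (-(∑ k, w k • gradient (Lk k) (Φ₁ t x))
          - δ • (gradient (Lk i) (Φ₁ t x) - gradient (Lk j) (Φ₁ t x))) t)
    (hΦ₂ : ∃ r > (0 : ℝ), ∀ x, ∀ t : ℝ, |t| < r →
      HasDerivAt (fun s => Φ₂ s x)
        (-(∑ k, w k • gradient (Lk k) (Φ₂ t x))
          + δ • (gradient (Lk i) (Φ₂ t x) - gradient (Lk j) (Φ₂ t x))) t)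
    (hΦbar : ∃ r > (0 : ℝ), ∀ x, ∀ t : ℝ, |t| < r →
      HasDerivAt (fun s => Φbar s x)
        (-(∑ k, w k • gradient (Lk k) (Φbar t x))) t)
    (x : EuclideanSpace ℝ (Fin n)) :
    (fun ε : ℝ =>
        L (Φ₂ ε (Φ₁ ε x)) - L (Φbar (2 * ε) x)
          - δ * ε ^ 2 *
            ⟪fderiv ℝ (gradient (fun y => ∑ k, w k * Lk k y)) x
                (gradient (Lk i) x - gradient (Lk j) x)
              - fderiv ℝ (gradient (fun y => Lk i y - Lk j y)) x
                (∑ k, w k • gradient (Lk k) x),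
              gradient L x⟫)
      =o[𝓝[>] 0] fun ε : ℝ => ε ^ 2 :=
  weight_schedule_perturbation_excess_loss_general L Lk hL hLk w i j δ Φ₁ Φ₂ Φbar hΦ₁0 hΦ₂0 hΦbar0
    hΦ₁ hΦ₂ hΦbar x
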